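/- Let α ∈ (0,1) and λ, ρ > 0. For every x > 0, the function x ↦ E_{α, ρ/α, (ρ−1)/α}(−λ x^{−ρ}) is differentiable at x, the series Σ_{n≥0} (∏_{j=0}^{n} Γ(jρ + ρ + 1)/Γ(jρ + ρ + α)) (−λ x^{−ρ})^n/(ρ^n n!) converges, and d/dx [E_{α, ρ/α, (ρ−1)/α}(−λ x^{−ρ})] = λ x^{−ρ−1} Σ_{n≥0} (∏_{j=0}^{n} Γ(jρ + ρ + 1)/Γ(jρ + ρ + α)) (−λ x^{−ρ})^n/(ρ^n n!). -/

import Mathlib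

open Filter Set Topology

/-- The Kilbas–Saigo function `E_{α,m,l}(z) = Σ_{n≥0} c_n z^n` with
`c_n = ∏_{k=0}^{n-1} Γ(1 + α(km + l)) / Γ(1 + α(km + l + 1))`. -/
noncomputable def kilbasSaigo (α m l : ℝ) (z : ℝ) : ℝ :=
  ∑' n : ℕ, (∏ k ∈ Finset.range n,
      Real.Gamma (1 + α * ((k : ℝ) * m + l)) / Real.Gamma (1 + α * ((k : ℝ) * m + l + 1))) * z ^ n

private lemma gamma_ratio_le' {α x : ℝ} (hα0 : 0 < α) (hα1 : α < 1) (hx : 1 ≤ x) :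
    Real.Gamma x / Real.Gamma (x + α) ≤ 2 * x ^ (-α) := by
  have hx0 : 0 < x := lt_of_lt_of_le one_pos hx
  have hxα : 0 < x + α := by linarith
  have hGx : 0 < Real.Gamma x := Real.Gamma_pos_of_pos hx0
  have hGxα : 0 < Real.Gamma (x + α) := Real.Gamma_pos_of_pos hxα
  have hGxα1 : 0 < Real.Gamma (x + α + 1) := Real.Gamma_pos_of_pos (by linarith)
  have hconv := Real.convexOn_log_Gamma.2 (Set.mem_Ioi.2 hxα)
    (Set.mem_Ioi.2 (show (0:ℝ) < x + α + 1 by linarith)) hα0.le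
    (by linarith : (0:ℝ) ≤ 1 - α) (by ring)
  have hpt : α • (x + α) + (1 - α) • (x + α + 1) = x + 1 := by
    simp only [smul_eq_mul]; ring
  rw [hpt] at hconv
  simp only [Function.comp_apply, smul_eq_mul] at hconv
  have key : Real.Gamma (x + 1) ≤ (x + α) ^ (1 - α) * Real.Gamma (x + α) := by
    have h1 : Real.Gamma (x + 1) = Real.exp (Real.log (Real.Gamma (x + 1))) :=
      (Real.exp_log (Real.Gamma_pos_of_pos (by linarith))).symm
    have h2 : Real.exp (α * Real.log (Real.Gamma (x + α)) +
        (1 - α) * Real.log (Real.Gamma (x + α + 1)))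
        = Real.Gamma (x + α) ^ α * Real.Gamma (x + α + 1) ^ (1 - α) := by
      rw [Real.exp_add, Real.rpow_def_of_pos hGxα, Real.rpow_def_of_pos hGxα1,
        mul_comm α, mul_comm (1 - α)]
    calc Real.Gamma (x + 1) ≤ Real.Gamma (x + α) ^ α * Real.Gamma (x + α + 1) ^ (1 - α) := by
          rw [h1, ← h2]; exact Real.exp_le_exp.2 hconv
      _ = (x + α) ^ (1 - α) * Real.Gamma (x + α) := by
          rw [Real.Gamma_add_one hxα.ne', Real.mul_rpow hxα.le hGxα.le,
            ← mul_assoc, mul_comm (Real.Gamma (x + α) ^ α), mul_assoc,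
            ← Real.rpow_add hGxα]
          norm_num
  rw [Real.Gamma_add_one hx0.ne'] at key
  have step1 : Real.Gamma x / Real.Gamma (x + α) ≤ (x + α) ^ (1 - α) / x := by
    rw [div_le_div_iff₀ hGxα hx0]
    nlinarith
  refine step1.trans ?_
  have h2x : x + α ≤ 2 * x := by linarith
  have hb : (x + α) ^ (1 - α) ≤ 2 * x ^ (1 - α) := by
    calc (x + α) ^ (1 - α) ≤ (2 * x) ^ (1 - α) :=
          Real.rpow_le_rpow hxα.le h2x (by linarith)
      _ = 2 ^ (1 - α) * x ^ (1 - α) := Real.mul_rpow (by norm_num) hx0.le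
      _ ≤ 2 * x ^ (1 - α) := by
          have : (2:ℝ) ^ (1 - α) ≤ 2 ^ (1:ℝ) :=
            Real.rpow_le_rpow_of_exponent_le one_le_two (by linarith)
          rw [Real.rpow_one] at this
          exact mul_le_mul_of_nonneg_right this (Real.rpow_nonneg hx0.le _)
  calc (x + α) ^ (1 - α) / x ≤ 2 * x ^ (1 - α) / x := by gcongr
    _ = 2 * x ^ (-α) := by
        rw [mul_div_assoc]
        congr 1
        rw [div_eq_mul_inv, ← Real.rpow_neg_one x, ← Real.rpow_add hx0]
        congr 1; ring

/-- Corollary 3.5: series representation of the density of the fractional Fréchet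
distribution, obtained by differentiating `x ↦ E_{α,ρ/α,(ρ-1)/α}(-λ x^{-ρ})`. -/
theorem fractional_frechet_density
    (α lam ρ : ℝ) (hα : α ∈ Set.Ioo (0:ℝ) 1) (hlam : 0 < lam) (hρ : 0 < ρ)
    (x : ℝ) (hx : 0 < x) :
    DifferentiableAt ℝ (fun y : ℝ => kilbasSaigo α (ρ / α) ((ρ - 1) / α) (-(lam * y ^ (-ρ)))) x
    ∧ Summable (fun n : ℕ =>
        (∏ j ∈ Finset.range (n + 1),
          Real.Gamma ((j : ℝ) * ρ + ρ + 1) / Real.Gamma ((j : ℝ) * ρ + ρ + α))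
          * (-(lam * x ^ (-ρ))) ^ n / (ρ ^ n * (n.factorial : ℝ)))
    ∧ deriv (fun y : ℝ => kilbasSaigo α (ρ / α) ((ρ - 1) / α) (-(lam * y ^ (-ρ)))) x
        = lam * x ^ (-ρ - 1) * ∑' n : ℕ,
            (∏ j ∈ Finset.range (n + 1),
              Real.Gamma ((j : ℝ) * ρ + ρ + 1) / Real.Gamma ((j : ℝ) * ρ + ρ + α))
              * (-(lam * x ^ (-ρ))) ^ n / (ρ ^ n * (n.factorial : ℝ)) := by
  obtain ⟨hα0, hα1⟩ := hα
  have hαne : α ≠ 0 := hα0.ne'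
  set c : ℕ → ℝ := fun n => ∏ k ∈ Finset.range n,
      Real.Gamma ((k:ℝ) * ρ + ρ) / Real.Gamma ((k:ℝ) * ρ + ρ + α) with hc_def
  have hterm_pos : ∀ k : ℕ,
      (0:ℝ) < Real.Gamma ((k:ℝ)*ρ+ρ) / Real.Gamma ((k:ℝ)*ρ+ρ+α) := by
    intro k
    have h1 : (0:ℝ) < (k:ℝ)*ρ+ρ := by positivity
    exact div_pos (Real.Gamma_pos_of_pos h1) (Real.Gamma_pos_of_pos (by linarith))
  have hcpos : ∀ n, 0 < c n := fun n => Finset.prod_pos fun k _ => hterm_pos k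
  set p := FormalMultilinearSeries.ofScalars ℝ c with hp_def
  -- kilbasSaigo agrees with the power series sum
  have hKS : ∀ z : ℝ, kilbasSaigo α (ρ/α) ((ρ-1)/α) z = p.sum z := by
    intro z
    rw [hp_def, ← FormalMultilinearSeries.ofScalarsSum,
      FormalMultilinearSeries.ofScalars_sum_eq, kilbasSaigo]
    refine tsum_congr fun n => ?_
    rw [smul_eq_mul]
    congr 1
    refine Finset.prod_congr rfl fun k _ => ?_
    have e1 : 1 + α * ((k:ℝ) * (ρ/α) + (ρ-1)/α) = (k:ℝ)*ρ + ρ := by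
      field_simp; ring
    have e2 : 1 + α * ((k:ℝ) * (ρ/α) + (ρ-1)/α + 1) = (k:ℝ)*ρ + ρ + α := by
      field_simp; ring
    rw [e1, e2]
  -- the ratio of consecutive coefficients tends to 0
  have hratio : Tendsto (fun n : ℕ => ‖c (n+1)‖ / ‖c n‖) atTop (𝓝 0) := by
    have heq : ∀ n : ℕ, ‖c (n+1)‖ / ‖c n‖
        = Real.Gamma ((n:ℝ)*ρ+ρ) / Real.Gamma ((n:ℝ)*ρ+ρ+α) := by
      intro n
      have hcs : c (n+1) = c n *
          (Real.Gamma ((n:ℝ)*ρ+ρ) / Real.Gamma ((n:ℝ)*ρ+ρ+α)) :=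
        Finset.prod_range_succ _ n
      rw [hcs, Real.norm_eq_abs, Real.norm_eq_abs, abs_of_pos (hcpos n),
        abs_of_pos (mul_pos (hcpos n) (hterm_pos n)), mul_comm,
        mul_div_assoc, div_self (hcpos n).ne', mul_one]
    have hxn : Tendsto (fun n : ℕ => (n:ℝ)*ρ+ρ) atTop atTop :=
      tendsto_atTop_add_const_right _ ρ
        (Tendsto.atTop_mul_const hρ tendsto_natCast_atTop_atTop)
    have hbound : ∀ᶠ n : ℕ in atTop, ‖c (n+1)‖/‖c n‖ ≤ 2 * ((n:ℝ)*ρ+ρ) ^ (-α) := by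
      filter_upwards [hxn.eventually_ge_atTop 1] with n hn
      rw [heq n]
      exact gamma_ratio_le' hα0 hα1 hn
    have hto : Tendsto (fun n : ℕ => 2 * ((n:ℝ)*ρ+ρ) ^ (-α)) atTop (𝓝 0) := by
      have h := ((tendsto_rpow_neg_atTop hα0).comp hxn).const_mul 2
      simpa using h
    exact squeeze_zero'
      (Eventually.of_forall fun n => div_nonneg (norm_nonneg _) (norm_nonneg _))
      hbound hto
  have hrad : p.radius = ⊤ :=
    FormalMultilinearSeries.ofScalars_radius_eq_top_of_tendsto ℝ c
      (Eventually.of_forall fun n => (hcpos n).ne') hratio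
  have hball : HasFPowerSeriesOnBall p.sum p 0 ⊤ := by
    have h := p.hasFPowerSeriesOnBall (by rw [hrad]; exact ENNReal.coe_lt_top.trans_le le_rfl)
    rwa [hrad] at h
  set z : ℝ := -(lam * x ^ (-ρ)) with hz_def
  have hzlt : lam * x ^ (-ρ) > 0 := mul_pos hlam (Real.rpow_pos_of_pos hx _)
  have hzne : z ≠ 0 := by rw [hz_def]; exact neg_ne_zero.2 hzlt.ne'
  -- the derivative series
  have hd := hball.fderiv
  have hsum0 : HasSum (fun n => p.derivSeries n fun _ => z) (fderiv ℝ p.sum z) := by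
    have h := hd.hasSum (y := z) (by simp)
    rwa [zero_add] at h
  have hsum1 : HasSum (fun n => (p.derivSeries n fun _ => z) 1) (deriv p.sum z) := by
    have h := (ContinuousLinearMap.apply ℝ ℝ (1:ℝ)).hasSum hsum0
    simpa [fderiv_apply_one_eq_deriv] using h
  have hterm : ∀ n : ℕ, (p.derivSeries n fun _ => z) 1 = ((n:ℝ)+1) * c (n+1) * z ^ n := by
    intro n
    have h1 : (p.derivSeries n fun _ => z) z = z * (((n:ℝ)+1) * c (n+1) * z ^ n) := by
      rw [FormalMultilinearSeries.derivSeries_apply_diag, hp_def,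
        FormalMultilinearSeries.ofScalars_apply_eq]
      push_cast [nsmul_eq_mul, smul_eq_mul]
      ring
    have h2 : (p.derivSeries n fun _ => z) z = z * (p.derivSeries n fun _ => z) 1 := by
      have h3 := (p.derivSeries n fun _ => z).map_smul z (1:ℝ)
      simpa [smul_eq_mul] using h3
    exact mul_left_cancel₀ hzne (h2.symm.trans h1)
  -- product identity for the stated coefficients
  have hA : ∀ n : ℕ, (∏ j ∈ Finset.range (n+1),
      Real.Gamma ((j:ℝ)*ρ+ρ+1) / Real.Gamma ((j:ℝ)*ρ+ρ+α))
      = ρ ^ (n+1) * (((n+1).factorial : ℕ) : ℝ) * c (n+1) := by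
    intro n
    have hjeq : ∀ j ∈ Finset.range (n+1),
        Real.Gamma ((j:ℝ)*ρ+ρ+1) / Real.Gamma ((j:ℝ)*ρ+ρ+α)
        = (ρ * ((j:ℝ)+1)) * (Real.Gamma ((j:ℝ)*ρ+ρ) / Real.Gamma ((j:ℝ)*ρ+ρ+α)) := by
      intro j _
      have hj : (0:ℝ) < (j:ℝ)*ρ+ρ := by positivity
      rw [Real.Gamma_add_one hj.ne']
      ring
    rw [Finset.prod_congr rfl hjeq, Finset.prod_mul_distrib, Finset.prod_mul_distrib,
      Finset.prod_const, Finset.card_range]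
    have hnat : (∏ j ∈ Finset.range (n+1), ((j:ℝ)+1)) = (((n+1).factorial : ℕ) : ℝ) := by
      rw [← Finset.prod_range_add_one_eq_factorial, Nat.cast_prod]
      push_cast
      rfl
    rw [hnat, hc_def]
  -- the target series
  have hT : ∀ n : ℕ, (∏ j ∈ Finset.range (n+1),
        Real.Gamma ((j:ℝ)*ρ+ρ+1) / Real.Gamma ((j:ℝ)*ρ+ρ+α)) * z ^ n
        / (ρ^n * (n.factorial : ℝ))
      = ρ * ((p.derivSeries n fun _ => z) 1) := by
    intro n
    rw [hterm n, hA n, pow_succ, Nat.factorial_succ]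
    have hρn : (ρ:ℝ)^n ≠ 0 := pow_ne_zero _ hρ.ne'
    have hfn : ((n.factorial:ℕ):ℝ) ≠ 0 := Nat.cast_ne_zero.2 n.factorial_ne_zero
    push_cast
    field_simp
  have hfeq : (fun n : ℕ => (∏ j ∈ Finset.range (n+1),
        Real.Gamma ((j:ℝ)*ρ+ρ+1) / Real.Gamma ((j:ℝ)*ρ+ρ+α)) * z ^ n
        / (ρ^n * (n.factorial : ℝ)))
      = fun n => ρ * ((p.derivSeries n fun _ => z) 1) := funext fun n => hT n
  have hsumT : HasSum (fun n : ℕ => (∏ j ∈ Finset.range (n+1),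
        Real.Gamma ((j:ℝ)*ρ+ρ+1) / Real.Gamma ((j:ℝ)*ρ+ρ+α)) * z ^ n
        / (ρ^n * (n.factorial : ℝ))) (ρ * deriv p.sum z) := by
    rw [hfeq]
    exact hsum1.mul_left ρ
  -- chain rule
  have hu : HasDerivAt (fun y : ℝ => -(lam * y ^ (-ρ))) (lam * ρ * x ^ (-ρ-1)) x := by
    have h1 : HasDerivAt (fun y : ℝ => y ^ (-ρ)) (-ρ * x ^ (-ρ-1)) x :=
      Real.hasDerivAt_rpow_const (Or.inl hx.ne')
    have h2 : HasDerivAt (fun y : ℝ => -(lam * y ^ (-ρ))) (-(lam * (-ρ * x ^ (-ρ-1)))) x :=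
      (h1.const_mul lam).neg
    convert h2 using 1
    ring
  have hfd : HasDerivAt p.sum (deriv p.sum z) z := by
    have hdiff : DifferentiableAt ℝ p.sum z := by
      have h := hball.hasFDerivAt (y := z) (by simp)
      rw [zero_add] at h
      exact h.differentiableAt
    exact hdiff.hasDerivAt
  have hcomp : HasDerivAt (fun y : ℝ => p.sum (-(lam * y ^ (-ρ))))
      (deriv p.sum z * (lam * ρ * x ^ (-ρ-1))) x := by
    have := hfd.comp x hu; exact this
  have hFun : (fun y : ℝ => kilbasSaigo α (ρ / α) ((ρ - 1) / α) (-(lam * y ^ (-ρ))))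
      = fun y : ℝ => p.sum (-(lam * y ^ (-ρ))) := funext fun y => hKS _
  refine ⟨?_, ?_, ?_⟩
  · rw [hFun]; exact hcomp.differentiableAt
  · exact hsumT.summable
  · rw [hFun, hcomp.deriv, hsumT.tsum_eq]
    ring
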